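/- arXiv:0810.4658 — 5 statements merged into one kernel-verified Lean document; each statement's English description precedes it below -/
import Mathlib

section
/- If p11 < p01, then for any ω, ω' ∈ [0,1] with ω ≤ ω', either T(ω) > ω' (so the crossing time L(ω,ω') = 1) or T^k(ω) ≤ ω' for all k ≥ 0 (so L(ω,ω') = ∞). That is, the crossing time min{k : T^k(ω) > ω'} for a negatively correlated channel takes only the values 0, 1, or ∞. -/
/-!
`T` is affine with slope `p11 - p01 ∈ [-1, 0)`, so it is decreasing and `T (T ω)` lies between
`ω` and `T ω`. Hence `T` maps the interval with endpoints `ω` and `T ω` into itself, and every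
iterate `T^[k] ω` stays below `max ω (T ω)`. If `T ω ≤ ω'`, no iterate ever exceeds `ω'`.
-/

open Set

theorem Antitone.iterate_mem_uIcc {α : Type*} [LinearOrder α] {f : α → α} (hf : Antitone f)
    {x : α} (hx : f (f x) ∈ uIcc x (f x)) (k : ℕ) : f^[k] x ∈ uIcc x (f x) :=
  (hf.mapsTo_uIcc.mono_right (uIcc_subset_uIcc right_mem_uIcc hx)).iterate k left_mem_uIcc

section Affine

variable {f : ℝ → ℝ} {a b : ℝ}

theorem antitone_of_affine_of_nonpos (hf : ∀ y, f y = a * y + b) (ha : a ≤ 0) :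
    Antitone f := fun y z hyz => by
  simp only [hf]
  nlinarith

theorem apply_apply_mem_uIcc_of_affine (hf : ∀ y, f y = a * y + b) (ha₁ : -1 ≤ a)
    (ha₀ : a ≤ 0) (x : ℝ) : f (f x) ∈ uIcc x (f x) := by
  have hleft : f (f x) - x = (1 + a) * (f x - x) := by simp only [hf]; ring
  have hright : f (f x) - f x = a * (f x - x) := by simp only [hf]; ring
  rw [mem_uIcc]
  rcases le_total x (f x) with h | h
  · exact Or.inl ⟨by nlinarith, by nlinarith⟩
  · exact Or.inr ⟨by nlinarith, by nlinarith⟩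

end Affine

theorem stmt5_general (p01 p11 : ℝ) (h01 : p01 ∈ Set.Icc (0:ℝ) 1) (h11 : p11 ∈ Set.Icc (0:ℝ) 1)
    (hlt : p11 < p01)
    (T : ℝ → ℝ) (hT : ∀ ω, T ω = ω * p11 + (1 - ω) * p01)
    (ω ω' : ℝ) (hle : ω ≤ ω') :
    T ω > ω' ∨ ∀ k : ℕ, T^[k] ω ≤ ω' := by
  refine (lt_or_ge ω' (T ω)).imp id fun hTω k => ?_
  have hT' : ∀ y, T y = (p11 - p01) * y + p01 := fun y => by rw [hT]; ring
  have hslope₁ : -1 ≤ p11 - p01 := by linarith [h01.2, h11.1]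
  have hslope₀ : p11 - p01 ≤ 0 := by linarith
  have hk := (antitone_of_affine_of_nonpos hT' hslope₀).iterate_mem_uIcc
    (apply_apply_mem_uIcc_of_affine hT' hslope₁ hslope₀ ω) k
  exact hk.2.trans (max_le hle hTω)

theorem stmt5 (p01 p11 : ℝ) (h01 : p01 ∈ Set.Icc (0:ℝ) 1) (h11 : p11 ∈ Set.Icc (0:ℝ) 1)
    (hlt : p11 < p01)
    (T : ℝ → ℝ) (hT : ∀ ω, T ω = ω * p11 + (1 - ω) * p01)
    (ω ω' : ℝ) (hω : ω ∈ Set.Icc (0:ℝ) 1) (hω' : ω' ∈ Set.Icc (0:ℝ) 1) (hle : ω ≤ ω') :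
    T ω > ω' ∨ ∀ k : ℕ, T^[k] ω ≤ ω' :=
  stmt5_general p01 p11 h01 h11 hlt T hT ω ω' hle
end

section
/- If p11 ≥ p01 and ω ≤ ω' < ω_o, then the crossing time L(ω,ω') = min{k : T^k(ω) > ω'} is finite and equals ⌊log_{p11-p01}((p01 - ω'(1-p11+p01))/(p01 - ω(1-p11+p01)))⌋ + 1 (assuming p11 > p01). -/
/-! In the coordinates centred at the fixed point `ωo` of `T`, the map is multiplication by
`r = p11 - p01 ∈ (0, 1)`, so `T^[k] ω = ωo - r ^ k (ωo - ω)`. Hence `T^[k] ω > ω'` if and only if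
`r ^ k < (ωo - ω') / (ωo - ω)`, i.e. `k` exceeds `x = log ((ωo - ω') / (ωo - ω)) / log r ≥ 0`,
and the least such `k` is `⌊x⌋ + 1`. -/

open Real

theorem iterate_eq_add_pow_mul_sub {R : Type*} [CommRing R] {T : R → R} {a r : R}
    (hT : ∀ x, T x = a + r * (x - a)) (k : ℕ) (x : R) :
    T^[k] x = a + r ^ k * (x - a) := by
  induction k with
  | zero => simp
  | succ k ih =>
    rw [Function.iterate_succ_apply', ih, hT]
    ring

theorem pow_lt_iff_log_div_log_lt {r c : ℝ} (hr0 : 0 < r) (hr1 : r < 1) (hc : 0 < c) (k : ℕ) :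
    r ^ k < c ↔ log c / log r < k := by
  rw [div_lt_iff_of_neg (log_neg hr0 hr1), ← log_pow, log_lt_log_iff (pow_pos hr0 k) hc]

theorem lt_add_pow_mul_sub_iff {a r x y : ℝ} (hr0 : 0 < r) (hr1 : r < 1) (hx : x < a) (hy : y < a)
    (k : ℕ) : y < a + r ^ k * (x - a) ↔ log ((a - y) / (a - x)) / log r < k := by
  rw [← pow_lt_iff_log_div_log_lt hr0 hr1 (div_pos (sub_pos.2 hy) (sub_pos.2 hx)),
    lt_div_iff₀ (sub_pos.2 hx)]
  constructor <;> intro h <;> linarith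

theorem Nat.sInf_setOf_lt_cast {R : Type*} [Semiring R] [LinearOrder R] [FloorSemiring R] {x : R}
    (hx : 0 ≤ x) : sInf {k : ℕ | x < k} = ⌊x⌋₊ + 1 := by
  have : {k : ℕ | x < k} = Set.Ici (⌊x⌋₊ + 1) := by
    ext k
    simp [← Nat.floor_lt hx]
  rw [this, csInf_Ici]

theorem stmt6_general (p01 p11 : ℝ) (h01 : p01 ∈ Set.Ioo (0:ℝ) 1) (h11 : p11 ∈ Set.Ioo (0:ℝ) 1)
    (hlt : p01 < p11)
    (T : ℝ → ℝ) (hT : ∀ ω, T ω = ω * p11 + (1 - ω) * p01)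
    (ωo : ℝ) (hωo : ωo = p01 / (1 + p01 - p11))
    (ω ω' : ℝ) (hle : ω ≤ ω') (hlt' : ω' < ωo) :
    (∃ k : ℕ, T^[k] ω > ω') ∧
    ((sInf {k : ℕ | T^[k] ω > ω'} : ℕ) : ℤ) =
      ⌊Real.log ((p01 - ω' * (1 - p11 + p01)) / (p01 - ω * (1 - p11 + p01))) /
        Real.log (p11 - p01)⌋ + 1 := by
  obtain ⟨hp01, -⟩ := h01
  obtain ⟨-, hp11⟩ := h11
  have hr0 : 0 < p11 - p01 := by linarith
  have hr1 : p11 - p01 < 1 := by linarith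
  have hfix : ωo * (1 + p01 - p11) = p01 := by
    rw [hωo, div_mul_cancel₀]
    linarith
  have hω : ω < ωo := hle.trans_lt hlt'
  have harg : (p01 - ω' * (1 - p11 + p01)) / (p01 - ω * (1 - p11 + p01)) =
      (ωo - ω') / (ωo - ω) := by
    rw [← mul_div_mul_right (ωo - ω') _ (by linarith : (1 + p01 - p11) ≠ 0)]
    congr 1 <;> linear_combination -hfix
  set x := log ((ωo - ω') / (ωo - ω)) / log (p11 - p01)
  have hx : 0 ≤ x := div_nonneg_of_nonpos
    (log_nonpos (div_pos (sub_pos.2 hlt') (sub_pos.2 hω)).le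
      ((div_le_one (sub_pos.2 hω)).2 (by linarith)))
    (log_neg hr0 hr1).le
  have hset : {k : ℕ | T^[k] ω > ω'} = {k : ℕ | x < k} := by
    ext k
    rw [Set.mem_ofPred_eq, gt_iff_lt, iterate_eq_add_pow_mul_sub (a := ωo) (r := p11 - p01)
      (fun y ↦ by linear_combination hT y - hfix) k ω, lt_add_pow_mul_sub_iff hr0 hr1 hω hlt']
    rfl
  have hmem : ⌊x⌋₊ + 1 ∈ {k : ℕ | T^[k] ω > ω'} := by
    rw [hset]
    exact_mod_cast Nat.lt_floor_add_one x
  refine ⟨⟨_, hmem⟩, ?_⟩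
  rw [hset, Nat.sInf_setOf_lt_cast hx, harg]
  push_cast
  rw [Int.natCast_floor_eq_floor hx]

theorem stmt6 (p01 p11 : ℝ) (h01 : p01 ∈ Set.Ioo (0:ℝ) 1) (h11 : p11 ∈ Set.Ioo (0:ℝ) 1)
    (hlt : p01 < p11)
    (T : ℝ → ℝ) (hT : ∀ ω, T ω = ω * p11 + (1 - ω) * p01)
    (ωo : ℝ) (hωo : ωo = p01 / (1 + p01 - p11))
    (ω ω' : ℝ) (hω0 : 0 ≤ ω) (hle : ω ≤ ω') (hlt' : ω' < ωo) :
    (∃ k : ℕ, T^[k] ω > ω') ∧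
    ((sInf {k : ℕ | T^[k] ω > ω'} : ℕ) : ℤ) =
      ⌊Real.log ((p01 - ω' * (1 - p11 + p01)) / (p01 - ω * (1 - p11 + p01))) /
        Real.log (p11 - p01)⌋ + 1 :=
  stmt6_general p01 p11 h01 h11 hlt T hT ωo hωo ω ω' hle hlt'
end

section
/- The optimal policy for the single-armed bandit with subsidy m is a threshold policy: there exists ω*_β(m) ∈ ℝ such that it is optimal to activate the arm exactly when ω > ω*_β(m). In particular, since V_{β,m}(·;u=1) is affine in ω, V_{β,m}(·;u=0) is convex in ω, V_{β,m}(0;u=1) ≤ V_{β,m}(0;u=0) and V_{β,m}(1;u=1) > V_{β,m}(1;u=0) when 0 ≤ m < 1, the two curves intersect at a unique point. -/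
/-!
The advantage `V1 - V0` of activating the arm is an affine function minus `β` times the convex
function `V ∘ T` (with `T` affine), hence concave on `[0, 1]`. It equals `-m ≤ 0` at `0` and
`1 - m > 0` at `1`. A continuous concave function on `[a, b]` that is `≤ 0` at `a` and `> 0` at `b`
is positive exactly to the right of the largest point where it is `≤ 0`, and vanishes there.
-/

open Set AffineMap

theorem ConvexOn.comp_lineMap {E : Type*} [AddCommGroup E] [Module ℝ E] {s : Set E} {f : E → ℝ}
    (hf : ConvexOn ℝ s f) {x y : E} (hx : x ∈ s) (hy : y ∈ s) :
    ConvexOn ℝ (Icc (0 : ℝ) 1) (f ∘ lineMap x y) :=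
  (hf.comp_affineMap (lineMap x y)).subset (hf.1.mapsTo_lineMap hx hy) (convex_Icc 0 1)

theorem ConcaveOn.pos_of_pos_of_mem_Icc {g : ℝ → ℝ} {a b x y : ℝ}
    (hg : ConcaveOn ℝ (Icc a b) g) (hx : x ∈ Icc a b) (hy : y ∈ Icc x b)
    (hgx : 0 < g x) (hgb : 0 < g b) : 0 < g y :=
  lt_of_lt_of_le (lt_min hgx hgb) <|
    hg.ge_on_segment hx (right_mem_Icc.2 (hx.1.trans hx.2)) (by rwa [segment_eq_Icc hx.2])

theorem ConcaveOn.exists_pos_iff_lt {g : ℝ → ℝ} {a b : ℝ} (hab : a ≤ b)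
    (hg : ConcaveOn ℝ (Icc a b) g) (hc : ContinuousOn g (Icc a b))
    (hga : g a ≤ 0) (hgb : 0 < g b) :
    ∃ c ∈ Icc a b, (∀ x ∈ Icc a b, 0 < g x ↔ c < x) ∧ g c = 0 := by
  set S := Icc a b ∩ g ⁻¹' Iic 0
  have hS : IsClosed S := hc.preimage_isClosed_of_isClosed isClosed_Icc isClosed_Iic
  have hSbdd : BddAbove S := bddAbove_Icc.mono inter_subset_left
  obtain ⟨hcI, hgc⟩ : sSup S ∈ S := hS.csSup_mem ⟨a, left_mem_Icc.2 hab, hga⟩ hSbdd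
  have hpos_of_lt : ∀ x ∈ Icc a b, sSup S < x → 0 < g x := fun x hx hlt =>
    lt_of_not_ge fun hgx => (le_csSup hSbdd ⟨hx, hgx⟩).not_gt hlt
  refine ⟨sSup S, hcI, fun x hx => ⟨fun hgx => lt_of_not_ge fun hxc => ?_, hpos_of_lt x hx⟩, ?_⟩
  · exact (hg.pos_of_pos_of_mem_Icc hx ⟨hxc, hcI.2⟩ hgx hgb).not_ge hgc
  · -- a zero of `g` on `[sSup S, b]` lies in `S`, so it is `sSup S` itself
    have hsub : Icc (sSup S) b ⊆ Icc a b := Icc_subset_Icc_left hcI.1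
    obtain ⟨z, hz, hgz⟩ := intermediate_value_Icc hcI.2 (hc.mono hsub) ⟨hgc, hgb.le⟩
    have hzc : z ≤ sSup S := le_csSup hSbdd ⟨hsub hz, hgz.le⟩
    rwa [le_antisymm hzc hz.1] at hgz

theorem stmt11_general (β m p01 p11 : ℝ) (hβ : β ∈ Set.Ico (0:ℝ) 1) (hm : m ∈ Set.Ico (0:ℝ) 1)
    (h01 : p01 ∈ Set.Icc (0:ℝ) 1) (h11 : p11 ∈ Set.Icc (0:ℝ) 1)
    (T : ℝ → ℝ) (hT : ∀ ω, T ω = ω * p11 + (1 - ω) * p01)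
    (V V0 V1 : ℝ → ℝ)
    (hconv : ConvexOn ℝ (Set.Icc (0:ℝ) 1) V)
    (hcont : ContinuousOn V (Set.Icc (0:ℝ) 1))
    (hV0 : ∀ ω, V0 ω = m + β * V (T ω))
    (hV1 : ∀ ω, V1 ω = ω + β * (ω * V p11 + (1 - ω) * V p01)) :
    ∃ ωs ∈ Set.Icc (0:ℝ) 1,
      (∀ ω ∈ Set.Icc (0:ℝ) 1, (V1 ω > V0 ω ↔ ωs < ω)) ∧ V1 ωs = V0 ωs := by
  obtain rfl : T = lineMap p01 p11 :=
    funext fun ω => by rw [hT, lineMap_apply_ring]; ring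
  have hV1_concave : ConcaveOn ℝ (Icc 0 1) V1 :=
    ⟨convex_Icc 0 1, fun x _ y _ a b _ _ hab => le_of_eq <| by
      simp only [hV1, smul_eq_mul]; linear_combination (β * V p01) * hab⟩
  have hV0_convex : ConvexOn ℝ (Icc 0 1) V0 :=
    (((hconv.comp_lineMap h01 h11).smul hβ.1).add_const m).congr fun ω _ => by
      simp only [hV0, Pi.add_apply, Function.comp, smul_eq_mul]; ring
  have hV0_cont : ContinuousOn V0 (Icc 0 1) := by
    rw [funext hV0]
    exact continuousOn_const.add <| continuousOn_const.mul <|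
      hcont.comp (by fun_prop) ((convex_Icc 0 1).mapsTo_lineMap h01 h11)
  have hV1_cont : ContinuousOn V1 (Icc 0 1) := by rw [funext hV1]; fun_prop
  obtain ⟨ωs, hωs, hpos_iff, hzero⟩ :=
    (hV1_concave.sub hV0_convex).exists_pos_iff_lt zero_le_one (hV1_cont.sub hV0_cont)
      (by simp [hV0, hV1, hm.1]) (by simp [hV0, hV1, hm.2])
  exact ⟨ωs, hωs, fun ω hω => by simpa using hpos_iff ω hω, sub_eq_zero.1 hzero⟩

theorem stmt11 (β m p01 p11 : ℝ) (hβ : β ∈ Set.Ico (0:ℝ) 1) (hm : m ∈ Set.Ico (0:ℝ) 1)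
    (h01 : p01 ∈ Set.Icc (0:ℝ) 1) (h11 : p11 ∈ Set.Icc (0:ℝ) 1)
    (T : ℝ → ℝ) (hT : ∀ ω, T ω = ω * p11 + (1 - ω) * p01)
    (V V0 V1 : ℝ → ℝ)
    (hconv : ConvexOn ℝ (Set.Icc (0:ℝ) 1) V)
    (hcont : ContinuousOn V (Set.Icc (0:ℝ) 1))
    (hV0 : ∀ ω, V0 ω = m + β * V (T ω))
    (hV1 : ∀ ω, V1 ω = ω + β * (ω * V p11 + (1 - ω) * V p01))
    (hmax : ∀ ω ∈ Set.Icc (0:ℝ) 1, V ω = max (V0 ω) (V1 ω)) :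
    ∃ ωs ∈ Set.Icc (0:ℝ) 1,
      (∀ ω ∈ Set.Icc (0:ℝ) 1, (V1 ω > V0 ω ↔ ωs < ω)) ∧ V1 ωs = V0 ωs :=
  stmt11_general β m p01 p11 hβ hm h01 h11 T hT V V0 V1 hconv hcont hV0 hV1
end

section
/- For all p01, x with 0 ≤ p01 ≤ 1 and 0 ≤ x ≤ 1 - p01, and all integers L ≥ 0: h(p01) := -p01·L·x^{L+2} + p01·(L+1)·x^{L+1} - x² - p01·x + 2x - 1 ≤ 0. -/
/-!
Writing `f x = (L + 1) x^L - L x^(L+1)`, the left-hand side equals `-(1 - x)^2 - p01 x (1 - f x)`,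
so it suffices that `f ≤ 1` on `[0, 1]`. Multiplying `L x^L ≤ ∑_{k<L} x^k` (each `x^k ≥ x^L`) by
`1 - x` gives `L x^L (1 - x) ≤ 1 - x^L`, which is exactly `f x ≤ 1`.
-/

open Finset

section

variable {R : Type*} [CommRing R] [LinearOrder R] [IsStrictOrderedRing R] {x : R}

theorem natCast_mul_pow_le_geom_sum (hx₀ : 0 ≤ x) (hx₁ : x ≤ 1) (n : ℕ) :
    (n : R) * x ^ n ≤ ∑ i ∈ range n, x ^ i := by
  calc (n : R) * x ^ n = ∑ _i ∈ range n, x ^ n := by simp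
    _ ≤ ∑ i ∈ range n, x ^ i :=
      sum_le_sum fun i hi => pow_le_pow_of_le_one hx₀ hx₁ (mem_range.1 hi).le

theorem pow_mul_succ_sub_mul_le_one (hx₀ : 0 ≤ x) (hx₁ : x ≤ 1) (n : ℕ) :
    x ^ n * ((n : R) + 1 - n * x) ≤ 1 := by
  have h := mul_le_mul_of_nonneg_left (natCast_mul_pow_le_geom_sum hx₀ hx₁ n)
    (sub_nonneg.2 hx₁)
  rw [mul_neg_geom_sum] at h
  linear_combination h

end

theorem stmt13_general (p01 x : ℝ) (h1 : 0 ≤ p01) (h3 : 0 ≤ x) (h4 : x ≤ 1 - p01)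
    (L : ℕ) :
    -p01 * (L : ℝ) * x ^ (L + 2) + p01 * ((L : ℝ) + 1) * x ^ (L + 1)
      - x ^ 2 - p01 * x + 2 * x - 1 ≤ 0 := by
  have hf := pow_mul_succ_sub_mul_le_one h3 (by linarith) L
  have hpx : 0 ≤ p01 * x * (1 - x ^ L * ((L : ℝ) + 1 - L * x)) :=
    mul_nonneg (mul_nonneg h1 h3) (sub_nonneg.2 hf)
  calc -p01 * (L : ℝ) * x ^ (L + 2) + p01 * ((L : ℝ) + 1) * x ^ (L + 1)
        - x ^ 2 - p01 * x + 2 * x - 1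
      = -(1 - x) ^ 2 - p01 * x * (1 - x ^ L * ((L : ℝ) + 1 - L * x)) := by ring
    _ ≤ 0 := by linarith [sq_nonneg (1 - x)]

theorem stmt13 (p01 x : ℝ) (h1 : 0 ≤ p01) (h2 : p01 ≤ 1) (h3 : 0 ≤ x) (h4 : x ≤ 1 - p01)
    (L : ℕ) :
    -p01 * (L : ℝ) * x ^ (L + 2) + p01 * ((L : ℝ) + 1) * x ^ (L + 1)
      - x ^ 2 - p01 * x + 2 * x - 1 ≤ 0 :=
  stmt13_general p01 x h1 h3 h4 L
end

section
/- Under the average reward criterion, Whittle's index for a positively correlated channel (p11 ≥ p01) with bandwidth B at belief ω with ω_o ≤ ω < p11 equals W(ω) = ω·B/(1 - p11 + ω), and for ω ≤ p01 or ω ≥ p11, W(ω) = ω·B. This function is monotonically increasing in ω on [0,1]. -/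
/-!
On `[ωo, 1]` the index is `max (ω B / (1 - p11 + ω)) (ω B)`, because the rational branch lies
above the line `ω B` exactly when its denominator is at most `1`, i.e. when `ω ≤ p11`. Both
branches are increasing (`ω / (c + ω) = 1 - c / (c + ω)`), hence so is their maximum. Below `p01`
the index is the line `ω B` itself, and `p01 ≤ ωo` (a restatement of `p01 ≤ p11`) glues the two
pieces.
-/

open Set

theorem MonotoneOn.union_of_le {α β : Type*} [PartialOrder α] [Preorder β] {f : α → β}
    {s t : Set α} (hs : MonotoneOn f s) (ht : MonotoneOn f t) (hst : ∀ x ∈ s, ∀ y ∈ t, x ≤ y)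
    (hf : ∀ x ∈ s, ∀ y ∈ t, f x ≤ f y) : MonotoneOn f (s ∪ t) := by
  rintro x (hx | hx) y (hy | hy) hxy
  · exact hs hx hy hxy
  · exact hf x hx y hy
  · rw [le_antisymm hxy (hst y hy x hx)]
  · exact ht hx hy hxy

theorem monotoneOn_mul_div_add {B c : ℝ} (hB : 0 ≤ B) (hc : 0 ≤ c) :
    MonotoneOn (fun x => x * B / (c + x)) (Ioi (-c)) := by
  intro x hx y hy hxy
  rw [mem_Ioi] at hx hy
  rw [div_le_div_iff₀ (by linarith) (by linarith)]
  nlinarith [mul_nonneg (mul_nonneg hB hc) (sub_nonneg.2 hxy)]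

theorem max_mul_div_one_sub_add {p B ω : ℝ} (hp : p < 1) (hB : 0 ≤ B) (hω : 0 ≤ ω) :
    max (ω * B / (1 - p + ω)) (ω * B) = if ω < p then ω * B / (1 - p + ω) else ω * B := by
  have hωB : 0 ≤ ω * B := mul_nonneg hω hB
  split_ifs with hωp
  · exact max_eq_left (le_div_self hωB (by linarith) (by linarith))
  · exact max_eq_right (div_le_self hωB (by linarith))

theorem stmt16 (p01 p11 B : ℝ) (h01 : p01 ∈ Set.Ioo (0:ℝ) 1) (h11 : p11 ∈ Set.Ioo (0:ℝ) 1)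
    (hle : p01 ≤ p11) (hB : 0 < B)
    (ωo : ℝ) (hωo : ωo = p01 / (1 + p01 - p11))
    (W : ℝ → ℝ)
    (hW1 : ∀ ω : ℝ, (0 ≤ ω ∧ ω ≤ p01) ∨ (p11 ≤ ω ∧ ω ≤ 1) → W ω = ω * B)
    (hW2 : ∀ ω : ℝ, ωo ≤ ω → ω < p11 → W ω = ω * B / (1 - p11 + ω)) :
    MonotoneOn W (Set.Icc 0 p01 ∪ Set.Icc ωo 1) ∧
    (∀ ω : ℝ, ωo ≤ ω → ω < p11 → W p01 ≤ W ω) ∧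
    (ωo < p11 → Filter.Tendsto W (nhdsWithin p11 (Set.Ico ωo p11)) (nhds (W p11))) := by
  obtain ⟨hp01, -⟩ := h01
  obtain ⟨-, hp11⟩ := h11
  set f : ℝ → ℝ := fun ω => ω * B / (1 - p11 + ω)
  have hp01_le_ωo : p01 ≤ ωo := hωo ▸ le_div_self hp01.le (by linarith) (by linarith)
  have hW_line : EqOn W (· * B) (Icc 0 p01) := fun ω hω => hW1 ω (Or.inl hω)
  have hW_max : EqOn W (fun ω => max (f ω) (ω * B)) (Icc ωo 1) := by
    rintro ω ⟨hωo_le, hω1⟩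
    dsimp only [f]
    rw [max_mul_div_one_sub_add hp11 hB.le (by linarith)]
    split_ifs with hω11
    · exact hW2 ω hωo_le hω11
    · exact hW1 ω (Or.inr ⟨not_lt.1 hω11, hω1⟩)
  have hW_ge : ∀ ω ∈ Icc ωo 1, p01 * B ≤ W ω := fun ω hω => by
    rw [hW_max hω]
    exact le_max_of_le_right (by gcongr; exact hp01_le_ωo.trans hω.1)
  have hWp01 : W p01 = p01 * B := hW_line ⟨hp01.le, le_rfl⟩
  refine ⟨?_, fun ω h1 h2 => hWp01 ▸ hW_ge ω ⟨h1, h2.le.trans hp11.le⟩, fun _ => ?_⟩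
  · have hmono_line : Monotone (· * B) := monotone_mul_right_of_nonneg hB.le
    have hmono_low : MonotoneOn W (Icc 0 p01) :=
      hW_line.congr_monotoneOn.2 (hmono_line.monotoneOn _)
    have hmono_high : MonotoneOn W (Icc ωo 1) := by
      refine hW_max.congr_monotoneOn.2 (MonotoneOn.max ?_ (hmono_line.monotoneOn _))
      refine (monotoneOn_mul_div_add hB.le (by linarith)).mono fun ω hω => ?_
      exact show -(1 - p11) < ω by linarith [hω.1]
    refine hmono_low.union_of_le hmono_high (fun x hx y hy => hx.2.trans (hp01_le_ωo.trans hy.1))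
      fun x hx y hy => ?_
    calc W x = x * B := hW_line hx
      _ ≤ p01 * B := by gcongr; exact hx.2
      _ ≤ W y := hW_ge y hy
  · have hWp11 : W p11 = f p11 := by
      rw [hW1 p11 (Or.inr ⟨le_rfl, hp11.le⟩)]
      simp [f]
    have hf_cont : ContinuousAt f p11 := ContinuousAt.div (by fun_prop) (by fun_prop) (by simp)
    exact hf_cont.continuousWithinAt.congr (fun ω hω => hW2 ω hω.1 hω.2) hWp11
end
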